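/- (Inverse theorem, version 1, structural form.) In the four-fold coupling setup, assume: (10.6) closure(range i_{K'} + range i_{K''}) = K0; (analyticity) G₊* ⊥ range i_{K''₋,0}, G₋ ⊥ range i_{K'₊,0}, and G₋ ⊥ G₊*; (orthogonality) G₋ ⊥ range i_{K''₋,0} and G₊* ⊥ range i_{K'₊,0}; and (10.7) U0*(range i_{Δ*,0}) = Δ*-part of H0 and U0(range i_{Δ,0}) = Δ-part of H0, where the Δ-part is H0 ⊖ D and the Δ*-part is H0 ⊖ D*. Then K0 decomposes as the orthogonal direct sum K0 = G₋ ⊕ H0 ⊕ G₊*, one has U0*(D) = D*, and moreover D = { h ∈ H0 : U0* h ∈ H0 } and D* = { h ∈ H0 : U0 h ∈ H0 }. -/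

import Mathlib

open ContinuousLinearMap

/-- Two subsets of an inner product space are orthogonal. -/
def OrthSets {K0 : Type*} [NormedAddCommGroup K0] [InnerProductSpace ℂ K0]
    (A B : Set K0) : Prop :=
  ∀ x ∈ A, ∀ y ∈ B, (inner ℂ x y : ℂ) = 0

/-- The closure of the sum of the images of `S''` and `S'` under the embeddings
`i''` and `i'`. -/
def couplingClosure {K0 K' K'' : Type*}
    [NormedAddCommGroup K0] [NormedSpace ℂ K0]
    [NormedAddCommGroup K'] [NormedSpace ℂ K']
    [NormedAddCommGroup K''] [NormedSpace ℂ K'']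
    (i'' : K'' →L[ℂ] K0) (i' : K' →L[ℂ] K0) (S'' : Set K'') (S' : Set K') : Set K0 :=
  closure {z : K0 | ∃ a ∈ S'', ∃ b ∈ S', z = i'' a + i' b}

/-- The image under `v : ℓ²(ℤ, E) → K0` of the sequences supported in `P ⊆ ℤ`. -/
def suppPart {E K0 : Type*}
    [NormedAddCommGroup E] [NormedSpace ℂ E]
    [NormedAddCommGroup K0] [NormedSpace ℂ K0]
    (v : lp (fun _ : ℤ => E) 2 →L[ℂ] K0) (P : Set ℤ) : Set K0 :=
  v '' {x : lp (fun _ : ℤ => E) 2 | ∀ n : ℤ, n ∉ P → x n = 0}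

/-!
By (10.7), `H0 = D ⊕ U0 (range i_{Δ,0})` and `H0 = D* ⊕ U0* (range i_{Δ*,0})`. Since
`U0*` maps `D` onto `D*`, this gives `U0 H0 ⊆ H0 + G₊*` and `U0* H0 ⊆ H0 + G₋`; as
`G₊*` and `G₋` are invariant under the shifts `U0` and `U0*` respectively, every translate
`U0ⁿ H0` lies in `G₋ + H0 + G₊*`. By *-cyclicity and (10.6) nothing nonzero is orthogonal to
this sum, and its three summands are closed and mutually orthogonal, so it is all of `K0`.
Finally, if `h = d + U0 g` with `d ∈ D`, `g ∈ range i_{Δ,0}` and `U0* h ∈ H0`, then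
`g ∈ G₋ ∩ H0 = 0`, so `h ∈ D`; dually for `D*`.
-/

namespace Unitary

variable {𝕜 E F : Type*} [RCLike 𝕜]
  [NormedAddCommGroup E] [InnerProductSpace 𝕜 E] [CompleteSpace E]
  [NormedAddCommGroup F] [InnerProductSpace 𝕜 F] [CompleteSpace F]

def IsStarCyclic (u : unitary (E →L[𝕜] E)) (W : Submodule 𝕜 E) : Prop :=
  Dense (Submodule.span 𝕜 {x : E | ∃ (n : ℤ) (k : E), k ∈ W ∧
    x = ((u ^ n : unitary (E →L[𝕜] E)) : E →L[𝕜] E) k} : Set E)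

lemma adjoint_apply_apply (u : unitary (E →L[𝕜] E)) (x : E) :
    adjoint (u : E →L[𝕜] E) ((u : E →L[𝕜] E) x) = x :=
  congr($(coe_star_mul_self u) x)

lemma apply_adjoint_apply (u : unitary (E →L[𝕜] E)) (x : E) :
    (u : E →L[𝕜] E) (adjoint (u : E →L[𝕜] E) x) = x :=
  congr($(coe_mul_star_self u) x)

lemma image_eq_of_adjoint_image_eq (u : unitary (E →L[𝕜] E)) {s t : Set E}
    (h : adjoint (u : E →L[𝕜] E) '' s = t) : (u : E →L[𝕜] E) '' t = s := by
  simp [← h, Set.image_image, apply_adjoint_apply]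

lemma intertwine_adjoint {u : unitary (E →L[𝕜] E)} {v : unitary (F →L[𝕜] F)} {i : E → F}
    (hi : ∀ x, i ((u : E →L[𝕜] E) x) = (v : F →L[𝕜] F) (i x)) (x : E) :
    i (adjoint (u : E →L[𝕜] E) x) = adjoint (v : F →L[𝕜] F) (i x) := by
  conv_rhs => rw [← apply_adjoint_apply u x, hi, adjoint_apply_apply]

lemma intertwine_zpow {u : unitary (E →L[𝕜] E)} {v : unitary (F →L[𝕜] F)} {i : E → F}
    (hi : ∀ x, i ((u : E →L[𝕜] E) x) = (v : F →L[𝕜] F) (i x)) (n : ℤ) (x : E) :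
    i (((u ^ n : unitary (E →L[𝕜] E)) : E →L[𝕜] E) x)
      = ((v ^ n : unitary (F →L[𝕜] F)) : F →L[𝕜] F) (i x) := by
  induction n using Int.induction_on generalizing x with
  | zero => rfl
  | succ n ih => simp only [zpow_add_one, Submonoid.coe_mul, mul_apply_eq_comp, hi, ih]
  | pred n ih =>
    simp only [zpow_sub_one, Submonoid.coe_mul, mul_apply_eq_comp, ← star_eq_inv, coe_star,
      star_eq_adjoint, intertwine_adjoint hi, ih]

lemma pow_apply_mem {u : unitary (E →L[𝕜] E)} {W : Set E}
    (hW : ∀ x ∈ W, (u : E →L[𝕜] E) x ∈ W) (m : ℕ) {x : E} (hx : x ∈ W) :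
    ((u ^ m : unitary (E →L[𝕜] E)) : E →L[𝕜] E) x ∈ W := by
  induction m generalizing x with
  | zero => exact hx
  | succ m ih => exact ih (hW x hx)

lemma zpow_apply_mem_sup (u : unitary (E →L[𝕜] E)) {M H P : Submodule 𝕜 E}
    (hP : ∀ x ∈ H ⊔ P, (u : E →L[𝕜] E) x ∈ H ⊔ P)
    (hM : ∀ x ∈ H ⊔ M, adjoint (u : E →L[𝕜] E) x ∈ H ⊔ M) (n : ℤ) {x : E}
    (hx : x ∈ H) :
    ((u ^ n : unitary (E →L[𝕜] E)) : E →L[𝕜] E) x ∈ M ⊔ H ⊔ P := by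
  obtain ⟨m, rfl | rfl⟩ := Int.eq_nat_or_neg n
  · rw [zpow_natCast]
    exact sup_le_sup_right le_sup_right P (pow_apply_mem hP m (Submodule.mem_sup_left hx))
  · rw [zpow_neg, zpow_natCast, ← inv_pow, ← star_eq_inv]
    exact ((sup_comm H M).le.trans le_sup_left)
      (pow_apply_mem (u := star u) hM m (Submodule.mem_sup_left hx))

end Unitary

lemma Submodule.apply_mem_sup_of_apply_mem {R M F : Type*} [Semiring R] [AddCommMonoid M]
    [Module R M] [FunLike F M M] [AddHomClass F M M] {A : F} {H G : Submodule R M}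
    (hH : ∀ h ∈ H, A h ∈ H ⊔ G) (hG : ∀ g ∈ G, A g ∈ G) {x : M} (hx : x ∈ H ⊔ G) :
    A x ∈ H ⊔ G := by
  obtain ⟨h, hh, g, hg, rfl⟩ := mem_sup.1 hx
  rw [map_add]
  exact add_mem (hH h hh) (mem_sup_right (hG g hg))

section Decomposition

variable {𝕜 E : Type*} [RCLike 𝕜] [NormedAddCommGroup E] [InnerProductSpace 𝕜 E]

lemma Submodule.exists_add_add_of_orthogonal_sup_eq_bot {A B C : Submodule 𝕜 E}
    [A.HasOrthogonalProjection] [B.HasOrthogonalProjection] [C.HasOrthogonalProjection]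
    (hAB : A ⟂ B) (hAC : A ⟂ C) (hBC : B ⟂ C) (h : (A ⊔ B ⊔ C)ᗮ = ⊥) (z : E) :
    ∃ a ∈ A, ∃ b ∈ B, ∃ c ∈ C, z = a + b + c := by
  obtain ⟨a, ha, z₁, hz₁, rfl⟩ := A.exists_add_mem_mem_orthogonal z
  obtain ⟨b, hb, z₂, hz₂, rfl⟩ := B.exists_add_mem_mem_orthogonal z₁
  obtain ⟨c, hc, r, hr, rfl⟩ := C.exists_add_mem_mem_orthogonal z₂
  have hrA : r ∈ Aᗮ := by
    simpa using sub_mem (sub_mem hz₁ (hAB.symm.le hb)) (hAC.symm.le hc)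
  have hrB : r ∈ Bᗮ := by simpa using sub_mem hz₂ (hBC.symm.le hc)
  have hr₀ : r = 0 := by
    rw [← mem_bot 𝕜, ← h, ← inf_orthogonal, ← inf_orthogonal]
    exact ⟨⟨hrA, hrB⟩, hr⟩
  exact ⟨a, ha, b, hb, c, hc, by rw [hr₀, add_zero, add_assoc]⟩

lemma Submodule.exists_add_of_image_eq_inf_orthogonal {D H : Submodule 𝕜 E}
    [D.HasOrthogonalProjection] (hDH : D ≤ H) {B : E → E} {S : Set E}
    (hS : B '' S = {h | h ∈ H ∧ ∀ d ∈ D, inner 𝕜 h d = 0}) {h : E} (hh : h ∈ H) :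
    ∃ d ∈ D, ∃ s ∈ S, h = d + B s := by
  obtain ⟨d, hd, t, ht, rfl⟩ := D.exists_add_mem_mem_orthogonal h
  have htH : t ∈ H := by simpa using sub_mem hh (hDH hd)
  obtain ⟨s, hs, rfl⟩ : t ∈ B '' S := hS ▸ ⟨htH, (mem_orthogonal' D t).1 ht⟩
  exact ⟨d, hd, s, hs, rfl⟩

lemma Submodule.apply_mem_sup_of_image_eq_inf_orthogonal {A : E →L[𝕜] E} {B : E → E}
    {D H G : Submodule 𝕜 E} [D.HasOrthogonalProjection] {S : Set E} (hDH : D ≤ H)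
    (hAD : ∀ d ∈ D, A d ∈ H) (hAB : ∀ x, A (B x) = x) (hSG : S ⊆ G)
    (hS : B '' S = {h | h ∈ H ∧ ∀ d ∈ D, inner 𝕜 h d = 0}) (hG : ∀ g ∈ G, A g ∈ G)
    {x : E} (hx : x ∈ H ⊔ G) : A x ∈ H ⊔ G := by
  refine apply_mem_sup_of_apply_mem (fun h hh => ?_) hG hx
  obtain ⟨d, hd, s, hs, rfl⟩ := exists_add_of_image_eq_inf_orthogonal hDH hS hh
  rw [map_add, hAB]
  exact add_mem (mem_sup_left (hAD d hd)) (mem_sup_right (hSG hs))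

lemma Submodule.coe_eq_setOf_apply_mem_of_image_eq_inf_orthogonal {A B : E →L[𝕜] E}
    {D H G : Submodule 𝕜 E} [D.HasOrthogonalProjection] {S : Set E} (hDH : D ≤ H)
    (hAD : ∀ d ∈ D, A d ∈ H) (hAB : ∀ x, A (B x) = x) (hSG : S ⊆ G)
    (hS : B '' S = {h | h ∈ H ∧ ∀ d ∈ D, inner 𝕜 h d = 0}) (hGH : G ⟂ H) :
    (D : Set E) = {h | h ∈ H ∧ A h ∈ H} := by
  ext h
  refine ⟨fun hd => ⟨hDH hd, hAD h hd⟩, fun ⟨hh, hAh⟩ => ?_⟩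
  obtain ⟨d, hd, s, hs, rfl⟩ := exists_add_of_image_eq_inf_orthogonal hDH hS hh
  have hsH : s ∈ H := by simpa [hAB] using sub_mem hAh (hAD d hd)
  have hs₀ : s = 0 := disjoint_def.1 hGH.disjoint s (hSG hs) hsH
  simpa [hs₀] using hd

end Decomposition

section SequenceSupport

variable (E : Type*) [NormedAddCommGroup E] [NormedSpace ℂ E]

def lpSupp (P : Set ℤ) : Submodule ℂ (lp (fun _ : ℤ => E) 2) where
  carrier := {x | ∀ n ∉ P, x n = 0}
  add_mem' ha hb n hn := by simp [ha n hn, hb n hn]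
  zero_mem' _ _ := rfl
  smul_mem' c x hx n hn := by simp [hx n hn]

lemma isClosed_lpSupp (P : Set ℤ) : IsClosed (lpSupp E P : Set (lp (fun _ : ℤ => E) 2)) := by
  simp only [lpSupp, Submodule.coe_set_mk, AddSubmonoid.coe_set_mk, AddSubsemigroup.coe_set_mk,
    Set.ofPred_forall]
  exact isClosed_iInter fun n => isClosed_iInter fun _ =>
    isClosed_eq (lp.evalCLM ℂ (fun _ : ℤ => E) 2 n).continuous continuous_const

variable {E}

lemma single_mem_lpSupp {P : Set ℤ} {i : ℤ} (hi : i ∈ P) (a : E) :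
    lp.single 2 i a ∈ lpSupp E P :=
  fun _ hn => lp.single_apply_ne (E := fun _ : ℤ => E) 2 i a (ne_of_mem_of_not_mem hi hn).symm

lemma shift_mem_lpSupp_nonneg {J : lp (fun _ : ℤ => E) 2 → lp (fun _ : ℤ => E) 2}
    (hJ : ∀ x n, J x n = x (n - 1)) {x : lp (fun _ : ℤ => E) 2}
    (hx : x ∈ lpSupp E {n | 0 ≤ n}) : J x ∈ lpSupp E {n | 0 ≤ n} :=
  fun n hn => by
    rw [hJ]
    exact hx _ (by simp_all; omega)

lemma exists_shift_eq_of_mem_lpSupp_neg {J : lp (fun _ : ℤ => E) 2 → lp (fun _ : ℤ => E) 2}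
    (hJ : ∀ x n, J x n = x (n - 1)) {y : lp (fun _ : ℤ => E) 2}
    (hy : y ∈ lpSupp E {n | n < 0}) : ∃ x ∈ lpSupp E {n | n < 0}, J x = y := by
  have hmem : Memℓp (fun n => y (n + 1)) 2 :=
    memℓp_gen <| (Equiv.addRight (1 : ℤ)).summable_iff.2 <|
      (memℓp_gen_iff (by norm_num)).1 y.2
  refine ⟨⟨_, hmem⟩, fun n hn => hy _ (by simp_all; omega), lp.ext <| funext fun n => ?_⟩
  simp [hJ]

end SequenceSupport

section SuppSubmodule

variable {E K0 : Type*} [NormedAddCommGroup E] [NormedSpace ℂ E]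
  [NormedAddCommGroup K0] [NormedSpace ℂ K0]

noncomputable def suppSubmodule (v : lp (fun _ : ℤ => E) 2 →L[ℂ] K0) (P : Set ℤ) :
    Submodule ℂ K0 :=
  (lpSupp E P).map (v : lp (fun _ : ℤ => E) 2 →ₗ[ℂ] K0)

lemma isClosed_suppSubmodule [CompleteSpace E] {v : lp (fun _ : ℤ => E) 2 →L[ℂ] K0}
    (hv : Isometry v) (P : Set ℤ) : IsClosed (suppSubmodule v P : Set K0) :=
  hv.isClosedEmbedding.isClosedMap _ (isClosed_lpSupp E P)

lemma range_single_subset_suppSubmodule (v : lp (fun _ : ℤ => E) 2 →L[ℂ] K0) {P : Set ℤ}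
    {i : ℤ} (hi : i ∈ P) :
    Set.range (fun a : E => v (lp.single 2 i a)) ⊆ suppSubmodule v P := by
  rintro _ ⟨a, rfl⟩
  exact ⟨_, single_mem_lpSupp hi a, rfl⟩

lemma apply_mem_suppSubmodule_nonneg {J : lp (fun _ : ℤ => E) 2 → lp (fun _ : ℤ => E) 2}
    (hJ : ∀ x n, J x n = x (n - 1)) {v : lp (fun _ : ℤ => E) 2 →L[ℂ] K0}
    {U : K0 →L[ℂ] K0} (hvJ : ∀ x, v (J x) = U (v x)) {y : K0}
    (hy : y ∈ suppSubmodule v {n | 0 ≤ n}) :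
    U y ∈ suppSubmodule v {n | 0 ≤ n} := by
  obtain ⟨x, hx, rfl⟩ := hy
  exact ⟨J x, shift_mem_lpSupp_nonneg hJ hx, hvJ x⟩

end SuppSubmodule

section Coupling

variable {K0 K' K'' : Type*} [NormedAddCommGroup K0] [NormedSpace ℂ K0]
  [NormedAddCommGroup K'] [NormedSpace ℂ K'] [NormedAddCommGroup K''] [NormedSpace ℂ K'']
  (i'' : K'' →L[ℂ] K0) (i' : K' →L[ℂ] K0)

-- `copy` makes the carrier definitionally equal to `couplingClosure i'' i' S'' S'`.
def couplingSubmodule (S'' : Submodule ℂ K'') (S' : Submodule ℂ K') : Submodule ℂ K0 :=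
  (S''.map (i'' : K'' →ₗ[ℂ] K0) ⊔ S'.map (i' : K' →ₗ[ℂ] K0)).topologicalClosure.copy
    (couplingClosure i'' i' S'' S') <| by
    rw [Submodule.topologicalClosure_coe, couplingClosure]
    congr 1
    ext z
    simp [Submodule.mem_sup, eq_comm]

instance [CompleteSpace K0] (S'' : Submodule ℂ K'') (S' : Submodule ℂ K') :
    CompleteSpace (couplingSubmodule i'' i' S'' S') :=
  isClosed_closure.completeSpace_coe

variable {i'' i'}

lemma couplingSubmodule_mono {S'' T'' : Submodule ℂ K''} {S' T' : Submodule ℂ K'}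
    (h'' : S'' ≤ T'') (h' : S' ≤ T') :
    couplingSubmodule i'' i' S'' S' ≤ couplingSubmodule i'' i' T'' T' :=
  closure_mono fun _ ⟨a, ha, b, hb, hz⟩ => ⟨a, h'' ha, b, h' hb, hz⟩

lemma apply_mem_couplingSubmodule_right {S'' : Submodule ℂ K''} {S' : Submodule ℂ K'} {k : K'}
    (hk : k ∈ S') : i' k ∈ couplingSubmodule i'' i' S'' S' :=
  subset_closure ⟨0, S''.zero_mem, k, hk, by simp⟩

lemma apply_mem_couplingSubmodule_left {S'' : Submodule ℂ K''} {S' : Submodule ℂ K'} {k : K''}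
    (hk : k ∈ S'') : i'' k ∈ couplingSubmodule i'' i' S'' S' :=
  subset_closure ⟨k, hk, 0, S'.zero_mem, by simp⟩

lemma image_couplingClosure (e : K0 ≃ₗᵢ[ℂ] K0)
    {f'' : K'' → K''} {f' : K' → K'} (h'' : ∀ x, i'' (f'' x) = e (i'' x))
    (h' : ∀ x, i' (f' x) = e (i' x)) (S'' : Set K'') (S' : Set K') :
    e '' couplingClosure i'' i' S'' S' = couplingClosure i'' i' (f'' '' S'') (f' '' S') := by
  refine (e.toHomeomorph.image_closure _).trans (congrArg closure ?_)
  ext z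
  constructor
  · rintro ⟨_, ⟨a, ha, b, hb, rfl⟩, rfl⟩
    exact ⟨f'' a, ⟨a, ha, rfl⟩, f' b, ⟨b, hb, rfl⟩, by simp [h'', h']⟩
  · rintro ⟨_, ⟨a, ha, rfl⟩, _, ⟨b, hb, rfl⟩, rfl⟩
    exact ⟨i'' a + i' b, ⟨a, ha, b, hb, rfl⟩, by simp [h'', h']⟩

end Coupling

section Orthogonality

variable {K0 K' K'' : Type*} [NormedAddCommGroup K0] [InnerProductSpace ℂ K0]
  [NormedAddCommGroup K'] [NormedSpace ℂ K'] [NormedAddCommGroup K''] [NormedSpace ℂ K'']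
  {i'' : K'' →L[ℂ] K0} {i' : K' →L[ℂ] K0}

lemma OrthSets.symm {A B : Set K0} (h : OrthSets A B) : OrthSets B A :=
  fun x hx y hy => by rw [← inner_conj_symm, h y hy x hx, map_zero]

lemma orthSets_couplingClosure {A : Set K0}
    {S'' : Set K''} {S' : Set K'} (h'' : OrthSets A (i'' '' S'')) (h' : OrthSets A (i' '' S')) :
    OrthSets A (couplingClosure i'' i' S'' S') := by
  intro x hx
  refine closure_minimal ?_ (isClosed_eq (continuous_const.inner continuous_id) continuous_const)
  rintro _ ⟨a, ha, b, hb, rfl⟩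
  show inner ℂ x (i'' a + i' b) = 0
  rw [inner_add_right, h'' x hx _ ⟨a, ha, rfl⟩, h' x hx _ ⟨b, hb, rfl⟩, add_zero]

end Orthogonality

section HilbertCoupling

variable {K0 K' K'' : Type*} [NormedAddCommGroup K0] [InnerProductSpace ℂ K0] [CompleteSpace K0]
  [NormedAddCommGroup K'] [InnerProductSpace ℂ K'] [CompleteSpace K']
  [NormedAddCommGroup K''] [InnerProductSpace ℂ K''] [CompleteSpace K'']
  {u0 : unitary (K0 →L[ℂ] K0)} {u' : unitary (K' →L[ℂ] K')}
  {u'' : unitary (K'' →L[ℂ] K'')}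
  {i' : K' →L[ℂ] K0} {i'' : K'' →L[ℂ] K0}

lemma adjoint_apply_mem_suppSubmodule_neg {E : Type*} [NormedAddCommGroup E] [NormedSpace ℂ E]
    {J : lp (fun _ : ℤ => E) 2 → lp (fun _ : ℤ => E) 2} (hJ : ∀ x n, J x n = x (n - 1))
    {v : lp (fun _ : ℤ => E) 2 →L[ℂ] K0}
    (hvJ : ∀ x, v (J x) = (u0 : K0 →L[ℂ] K0) (v x)) {y : K0}
    (hy : y ∈ suppSubmodule v {n | n < 0}) :
    adjoint (u0 : K0 →L[ℂ] K0) y ∈ suppSubmodule v {n | n < 0} := by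
  obtain ⟨x, hx, rfl⟩ := hy
  obtain ⟨w, hw, rfl⟩ := exists_shift_eq_of_mem_lpSupp_neg hJ hx
  rw [ContinuousLinearMap.coe_coe, hvJ, Unitary.adjoint_apply_apply]
  exact ⟨w, hw, rfl⟩

lemma adjoint_image_couplingClosure
    (hi'' : ∀ x, i'' ((u'' : K'' →L[ℂ] K'') x) = (u0 : K0 →L[ℂ] K0) (i'' x))
    (hi' : ∀ x, i' ((u' : K' →L[ℂ] K') x) = (u0 : K0 →L[ℂ] K0) (i' x))
    (S'' : Set K'') (S' : Set K') :
    adjoint (u0 : K0 →L[ℂ] K0) '' couplingClosure i'' i' S'' ((u' : K' →L[ℂ] K') '' S')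
      = couplingClosure i'' i' (adjoint (u'' : K'' →L[ℂ] K'') '' S'') S' := by
  have := image_couplingClosure (Unitary.linearIsometryEquiv (star u0))
    (Unitary.intertwine_adjoint hi'') (Unitary.intertwine_adjoint hi') S''
    ((u' : K' →L[ℂ] K') '' S')
  simp only [Set.image_image, Unitary.adjoint_apply_apply, Set.image_id'] at this
  exact this

lemma Unitary.IsStarCyclic.inner_apply_eq_zero {W : Submodule ℂ K'}
    (hcyc : Unitary.IsStarCyclic u' W)
    (hi : ∀ x, i' ((u' : K' →L[ℂ] K') x) = (u0 : K0 →L[ℂ] K0) (i' x)) {r : K0}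
    (hr : ∀ n : ℤ, ∀ k ∈ W,
      inner ℂ r (((u0 ^ n : unitary (K0 →L[ℂ] K0)) : K0 →L[ℂ] K0) (i' k)) = 0)
    (y : K') : inner ℂ r (i' y) = 0 := by
  have : (innerSL ℂ r).comp i' = 0 := ContinuousLinearMap.ext_on hcyc <| by
    rintro _ ⟨n, k, hk, rfl⟩
    simp [Unitary.intertwine_zpow hi, hr n k hk]
  simpa using congr($this y)

lemma orthogonal_eq_bot_of_zpow_apply_mem {W' : Submodule ℂ K'} {W'' : Submodule ℂ K''}
    (hcyc' : Unitary.IsStarCyclic u' W') (hcyc'' : Unitary.IsStarCyclic u'' W'')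
    (hi' : ∀ x, i' ((u' : K' →L[ℂ] K') x) = (u0 : K0 →L[ℂ] K0) (i' x))
    (hi'' : ∀ x, i'' ((u'' : K'' →L[ℂ] K'') x) = (u0 : K0 →L[ℂ] K0) (i'' x))
    (hdense : closure {z : K0 | ∃ (a : K') (b : K''), z = i' a + i'' b} = Set.univ)
    {V : Submodule ℂ K0}
    (hV' : ∀ n : ℤ, ∀ k ∈ W',
      ((u0 ^ n : unitary (K0 →L[ℂ] K0)) : K0 →L[ℂ] K0) (i' k) ∈ V)
    (hV'' : ∀ n : ℤ, ∀ k ∈ W'',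
      ((u0 ^ n : unitary (K0 →L[ℂ] K0)) : K0 →L[ℂ] K0) (i'' k) ∈ V) :
    Vᗮ = ⊥ := by
  refine (Submodule.eq_bot_iff _).2 fun r hr => ?_
  have h' := hcyc'.inner_apply_eq_zero hi' fun n k hk =>
    (Submodule.mem_orthogonal' V r).1 hr _ (hV' n k hk)
  have h'' := hcyc''.inner_apply_eq_zero hi'' fun n k hk =>
    (Submodule.mem_orthogonal' V r).1 hr _ (hV'' n k hk)
  refine (dense_iff_closure_eq.2 hdense).eq_zero_of_inner_left ℂ ?_
  rintro _ ⟨a, b, rfl⟩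
  rw [inner_add_right, h' a, h'' b, add_zero]

end HilbertCoupling

theorem stmt_17_general {K0 K' K'' Δt Δts : Type*}
    [NormedAddCommGroup K0] [InnerProductSpace ℂ K0] [CompleteSpace K0]
    [NormedAddCommGroup K'] [InnerProductSpace ℂ K'] [CompleteSpace K']
    [NormedAddCommGroup K''] [InnerProductSpace ℂ K''] [CompleteSpace K'']
    [NormedAddCommGroup Δt] [InnerProductSpace ℂ Δt] [CompleteSpace Δt]
    [NormedAddCommGroup Δts] [InnerProductSpace ℂ Δts] [CompleteSpace Δts]
    (U0 : K0 →L[ℂ] K0) (hU0 : U0 ∈ unitary (K0 →L[ℂ] K0))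
    (U' : K' →L[ℂ] K') (hU' : U' ∈ unitary (K' →L[ℂ] K'))
    (U'' : K'' →L[ℂ] K'') (hU'' : U'' ∈ unitary (K'' →L[ℂ] K''))
    (K'p : Submodule ℂ K') (K''m : Submodule ℂ K'')
    (hinvar' : ∀ x ∈ K'p, U' x ∈ K'p)
    (hinvar'' : ∀ x ∈ K''m, adjoint U'' x ∈ K''m)
    -- `K'₊` and `K''₋` are *-cyclic for `U'` and `U''`
    (hcyc' : Dense (Submodule.span ℂ {x : K' | ∃ (n : ℤ) (k : K'), k ∈ K'p ∧
        x = (((⟨U', hU'⟩ : unitary (K' →L[ℂ] K')) ^ n : unitary (K' →L[ℂ] K')) : K' →L[ℂ] K') k}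
        : Set K'))
    (hcyc'' : Dense (Submodule.span ℂ {x : K'' | ∃ (n : ℤ) (k : K''), k ∈ K''m ∧
        x = (((⟨U'', hU''⟩ : unitary (K'' →L[ℂ] K'')) ^ n : unitary (K'' →L[ℂ] K'')) : K'' →L[ℂ] K'') k}
        : Set K''))
    -- the bilateral shifts on `ℓ²(ℤ, Δ̃)` and `ℓ²(ℤ, Δ̃*)`
    (J : lp (fun _ : ℤ => Δt) 2 →L[ℂ] lp (fun _ : ℤ => Δt) 2)
    (hJ : ∀ (x : lp (fun _ : ℤ => Δt) 2) (n : ℤ), (J x) n = x (n - 1))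
    (Js : lp (fun _ : ℤ => Δts) 2 →L[ℂ] lp (fun _ : ℤ => Δts) 2)
    (hJs : ∀ (x : lp (fun _ : ℤ => Δts) 2) (n : ℤ), (Js x) n = x (n - 1))
    -- the four isometric embeddings of the four-fold AA-unitary coupling
    (vΔ : lp (fun _ : ℤ => Δt) 2 →L[ℂ] K0) (hvΔ : Isometry vΔ)
    (hvΔJ : ∀ x, vΔ (J x) = U0 (vΔ x))
    (vΔs : lp (fun _ : ℤ => Δts) 2 →L[ℂ] K0) (hvΔs : Isometry vΔs)
    (hvΔsJ : ∀ x, vΔs (Js x) = U0 (vΔs x))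
    (iK' : K' →L[ℂ] K0) (hiK'U : ∀ x, iK' (U' x) = U0 (iK' x))
    (iK'' : K'' →L[ℂ] K0) (hiK''U : ∀ x, iK'' (U'' x) = U0 (iK'' x))
    -- (10.6): minimality of the coupling
    (h106 : closure {z : K0 | ∃ (a : K') (b : K''), z = iK' a + iK'' b} = Set.univ)
    -- analyticity conditions
    (han1 : OrthSets (suppPart vΔs {n : ℤ | 0 ≤ n}) (iK'' '' (K''m : Set K'')))
    (han2 : OrthSets (suppPart vΔ {n : ℤ | n < 0}) (iK' '' (K'p : Set K')))
    (han3 : OrthSets (suppPart vΔ {n : ℤ | n < 0}) (suppPart vΔs {n : ℤ | 0 ≤ n}))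
    -- orthogonality conditions
    (hor1 : OrthSets (suppPart vΔ {n : ℤ | n < 0}) (iK'' '' (K''m : Set K'')))
    (hor2 : OrthSets (suppPart vΔs {n : ℤ | 0 ≤ n}) (iK' '' (K'p : Set K')))
    -- (10.7): the subspace identities
    (h107a : (adjoint U0) ''
        Set.range (fun δ : Δts => vΔs (lp.single 2 (0 : ℤ) δ))
      = {h : K0 | h ∈ couplingClosure iK'' iK' (K''m : Set K'') (K'p : Set K') ∧
          ∀ d ∈ couplingClosure iK'' iK' ((adjoint U'') '' (K''m : Set K'')) (K'p : Set K'),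
            (inner ℂ h d : ℂ) = 0})
    (h107b : U0 ''
        Set.range (fun δ : Δt => vΔ (lp.single 2 (-1 : ℤ) δ))
      = {h : K0 | h ∈ couplingClosure iK'' iK' (K''m : Set K'') (K'p : Set K') ∧
          ∀ d ∈ couplingClosure iK'' iK' (K''m : Set K'') ((U' : K' → K') '' (K'p : Set K')),
            (inner ℂ h d : ℂ) = 0}) :
    -- `K0 = G₋ ⊕ H0 ⊕ G₊*` as an orthogonal direct sum
    (OrthSets (suppPart vΔ {n : ℤ | n < 0})
        (couplingClosure iK'' iK' (K''m : Set K'') (K'p : Set K')) ∧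
      OrthSets (suppPart vΔ {n : ℤ | n < 0}) (suppPart vΔs {n : ℤ | 0 ≤ n}) ∧
      OrthSets (couplingClosure iK'' iK' (K''m : Set K'') (K'p : Set K'))
        (suppPart vΔs {n : ℤ | 0 ≤ n}) ∧
      (∀ z : K0, ∃ a ∈ suppPart vΔ {n : ℤ | n < 0},
        ∃ b ∈ couplingClosure iK'' iK' (K''m : Set K'') (K'p : Set K'),
        ∃ c ∈ suppPart vΔs {n : ℤ | 0 ≤ n}, z = a + b + c)) ∧
    -- `U0*(D) = D*`
    ((adjoint U0) ''
        couplingClosure iK'' iK' (K''m : Set K'') ((U' : K' → K') '' (K'p : Set K'))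
      = couplingClosure iK'' iK' ((adjoint U'') '' (K''m : Set K'')) (K'p : Set K')) ∧
    -- `D = {h ∈ H0 : U0* h ∈ H0}` and `D* = {h ∈ H0 : U0 h ∈ H0}`
    (couplingClosure iK'' iK' (K''m : Set K'') ((U' : K' → K') '' (K'p : Set K'))
      = {h : K0 | h ∈ couplingClosure iK'' iK' (K''m : Set K'') (K'p : Set K') ∧
          adjoint U0 h ∈ couplingClosure iK'' iK' (K''m : Set K'') (K'p : Set K')}) ∧
    (couplingClosure iK'' iK' ((adjoint U'') '' (K''m : Set K'')) (K'p : Set K')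
      = {h : K0 | h ∈ couplingClosure iK'' iK' (K''m : Set K'') (K'p : Set K') ∧
          U0 h ∈ couplingClosure iK'' iK' (K''m : Set K'') (K'p : Set K')}) := by
  let u0 : unitary (K0 →L[ℂ] K0) := ⟨U0, hU0⟩
  let Gm := suppSubmodule vΔ {n : ℤ | n < 0}
  let Gp := suppSubmodule vΔs {n : ℤ | 0 ≤ n}
  let H := couplingSubmodule iK'' iK' K''m K'p
  let D := couplingSubmodule iK'' iK' K''m (K'p.map (U' : K' →ₗ[ℂ] K'))
  let Ds := couplingSubmodule iK'' iK' (K''m.map (adjoint U'' : K'' →ₗ[ℂ] K'')) K'p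
  have : CompleteSpace Gm := (isClosed_suppSubmodule hvΔ _).completeSpace_coe
  have : CompleteSpace Gp := (isClosed_suppSubmodule hvΔs _).completeSpace_coe
  have hUD : adjoint U0 '' (D : Set K0) = Ds := adjoint_image_couplingClosure (u0 := u0)
    (u' := ⟨U', hU'⟩) (u'' := ⟨U'', hU''⟩) hiK''U hiK'U _ _
  have hDH : D ≤ H := couplingSubmodule_mono le_rfl (Submodule.map_le_iff_le_comap.2 hinvar')
  have hDsH : Ds ≤ H := couplingSubmodule_mono (Submodule.map_le_iff_le_comap.2 hinvar'') le_rfl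
  have hAD : ∀ d ∈ D, adjoint U0 d ∈ H := fun d hd =>
    hDsH (hUD.subset (Set.mem_image_of_mem _ hd))
  have hUDs : ∀ d ∈ Ds, U0 d ∈ H := fun d hd =>
    hDH ((Unitary.image_eq_of_adjoint_image_eq u0 hUD).subset (Set.mem_image_of_mem _ hd))
  have hGmH : Gm ⟂ H := Submodule.isOrtho_iff_inner_eq.2 (orthSets_couplingClosure hor1 han2)
  have hGpH : Gp ⟂ H := Submodule.isOrtho_iff_inner_eq.2 (orthSets_couplingClosure han1 hor2)
  have hSm := range_single_subset_suppSubmodule vΔ (P := {n : ℤ | n < 0}) (i := -1) (by simp)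
  have hSp := range_single_subset_suppSubmodule vΔs (P := {n : ℤ | 0 ≤ n}) (i := 0) (by simp)
  have hUH : ∀ x ∈ H ⊔ Gp, U0 x ∈ H ⊔ Gp := fun _ =>
    Submodule.apply_mem_sup_of_image_eq_inf_orthogonal hDsH hUDs
      (Unitary.apply_adjoint_apply u0) hSp h107a fun _ => apply_mem_suppSubmodule_nonneg hJs hvΔsJ
  have hAH : ∀ x ∈ H ⊔ Gm, adjoint U0 x ∈ H ⊔ Gm := fun _ =>
    Submodule.apply_mem_sup_of_image_eq_inf_orthogonal hDH hAD (Unitary.adjoint_apply_apply u0)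
      hSm h107b fun _ => adjoint_apply_mem_suppSubmodule_neg (u0 := u0) hJ hvΔJ
  have hbot : (Gm ⊔ H ⊔ Gp)ᗮ = ⊥ := orthogonal_eq_bot_of_zpow_apply_mem (u0 := u0)
    (u' := ⟨U', hU'⟩) (u'' := ⟨U'', hU''⟩) hcyc' hcyc'' hiK'U hiK''U h106
    (fun n _ hk => Unitary.zpow_apply_mem_sup u0 hUH hAH n (apply_mem_couplingSubmodule_right hk))
    (fun n _ hk => Unitary.zpow_apply_mem_sup u0 hUH hAH n (apply_mem_couplingSubmodule_left hk))
  refine ⟨⟨orthSets_couplingClosure hor1 han2, han3, (orthSets_couplingClosure han1 hor2).symm,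
    Submodule.exists_add_add_of_orthogonal_sup_eq_bot hGmH
      (Submodule.isOrtho_iff_inner_eq (V := Gp) |>.2 han3) hGpH.symm hbot⟩, hUD, ?_, ?_⟩
  · exact Submodule.coe_eq_setOf_apply_mem_of_image_eq_inf_orthogonal hDH hAD
      (Unitary.adjoint_apply_apply u0) hSm h107b hGmH
  · exact Submodule.coe_eq_setOf_apply_mem_of_image_eq_inf_orthogonal hDsH hUDs
      (Unitary.apply_adjoint_apply u0) hSp h107a hGpH

/-- **Inverse theorem for the universal extension, version 1 (structural form).**
In the four-fold AA-unitary coupling setup, the hypotheses (10.6), the analyticity and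
orthogonality conditions, and the subspace identities (10.7) imply that `K0` decomposes
as the orthogonal direct sum `K0 = G₋ ⊕ H0 ⊕ G₊*`, that `U0*(D) = D*`, and that
`D = {h ∈ H0 : U0* h ∈ H0}` and `D* = {h ∈ H0 : U0 h ∈ H0}`. -/
theorem stmt_17 {K0 K' K'' Δt Δts : Type*}
    [NormedAddCommGroup K0] [InnerProductSpace ℂ K0] [CompleteSpace K0]
    [NormedAddCommGroup K'] [InnerProductSpace ℂ K'] [CompleteSpace K']
    [NormedAddCommGroup K''] [InnerProductSpace ℂ K''] [CompleteSpace K'']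
    [NormedAddCommGroup Δt] [InnerProductSpace ℂ Δt] [CompleteSpace Δt]
    [NormedAddCommGroup Δts] [InnerProductSpace ℂ Δts] [CompleteSpace Δts]
    (U0 : K0 →L[ℂ] K0) (hU0 : U0 ∈ unitary (K0 →L[ℂ] K0))
    (U' : K' →L[ℂ] K') (hU' : U' ∈ unitary (K' →L[ℂ] K'))
    (U'' : K'' →L[ℂ] K'') (hU'' : U'' ∈ unitary (K'' →L[ℂ] K''))
    (K'p : Submodule ℂ K') (K''m : Submodule ℂ K'')
    (hclosed' : IsClosed (K'p : Set K')) (hclosed'' : IsClosed (K''m : Set K''))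
    (hinvar' : ∀ x ∈ K'p, U' x ∈ K'p)
    (hinvar'' : ∀ x ∈ K''m, adjoint U'' x ∈ K''m)
    -- `K'₊` and `K''₋` are *-cyclic for `U'` and `U''`
    (hcyc' : Dense (Submodule.span ℂ {x : K' | ∃ (n : ℤ) (k : K'), k ∈ K'p ∧
        x = (((⟨U', hU'⟩ : unitary (K' →L[ℂ] K')) ^ n : unitary (K' →L[ℂ] K')) : K' →L[ℂ] K') k}
        : Set K'))
    (hcyc'' : Dense (Submodule.span ℂ {x : K'' | ∃ (n : ℤ) (k : K''), k ∈ K''m ∧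
        x = (((⟨U'', hU''⟩ : unitary (K'' →L[ℂ] K'')) ^ n : unitary (K'' →L[ℂ] K'')) : K'' →L[ℂ] K'') k}
        : Set K''))
    -- the bilateral shifts on `ℓ²(ℤ, Δ̃)` and `ℓ²(ℤ, Δ̃*)`
    (J : lp (fun _ : ℤ => Δt) 2 →L[ℂ] lp (fun _ : ℤ => Δt) 2)
    (hJ : ∀ (x : lp (fun _ : ℤ => Δt) 2) (n : ℤ), (J x) n = x (n - 1))
    (Js : lp (fun _ : ℤ => Δts) 2 →L[ℂ] lp (fun _ : ℤ => Δts) 2)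
    (hJs : ∀ (x : lp (fun _ : ℤ => Δts) 2) (n : ℤ), (Js x) n = x (n - 1))
    -- the four isometric embeddings of the four-fold AA-unitary coupling
    (vΔ : lp (fun _ : ℤ => Δt) 2 →L[ℂ] K0) (hvΔ : Isometry vΔ)
    (hvΔJ : ∀ x, vΔ (J x) = U0 (vΔ x))
    (vΔs : lp (fun _ : ℤ => Δts) 2 →L[ℂ] K0) (hvΔs : Isometry vΔs)
    (hvΔsJ : ∀ x, vΔs (Js x) = U0 (vΔs x))
    (iK' : K' →L[ℂ] K0) (hiK' : Isometry iK') (hiK'U : ∀ x, iK' (U' x) = U0 (iK' x))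
    (iK'' : K'' →L[ℂ] K0) (hiK'' : Isometry iK'') (hiK''U : ∀ x, iK'' (U'' x) = U0 (iK'' x))
    -- (10.6): minimality of the coupling
    (h106 : closure {z : K0 | ∃ (a : K') (b : K''), z = iK' a + iK'' b} = Set.univ)
    -- analyticity conditions
    (han1 : OrthSets (suppPart vΔs {n : ℤ | 0 ≤ n}) (iK'' '' (K''m : Set K'')))
    (han2 : OrthSets (suppPart vΔ {n : ℤ | n < 0}) (iK' '' (K'p : Set K')))
    (han3 : OrthSets (suppPart vΔ {n : ℤ | n < 0}) (suppPart vΔs {n : ℤ | 0 ≤ n}))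
    -- orthogonality conditions
    (hor1 : OrthSets (suppPart vΔ {n : ℤ | n < 0}) (iK'' '' (K''m : Set K'')))
    (hor2 : OrthSets (suppPart vΔs {n : ℤ | 0 ≤ n}) (iK' '' (K'p : Set K')))
    -- (10.7): the subspace identities
    (h107a : (adjoint U0) ''
        Set.range (fun δ : Δts => vΔs (lp.single 2 (0 : ℤ) δ))
      = {h : K0 | h ∈ couplingClosure iK'' iK' (K''m : Set K'') (K'p : Set K') ∧
          ∀ d ∈ couplingClosure iK'' iK' ((adjoint U'') '' (K''m : Set K'')) (K'p : Set K'),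
            (inner ℂ h d : ℂ) = 0})
    (h107b : U0 ''
        Set.range (fun δ : Δt => vΔ (lp.single 2 (-1 : ℤ) δ))
      = {h : K0 | h ∈ couplingClosure iK'' iK' (K''m : Set K'') (K'p : Set K') ∧
          ∀ d ∈ couplingClosure iK'' iK' (K''m : Set K'') ((U' : K' → K') '' (K'p : Set K')),
            (inner ℂ h d : ℂ) = 0}) :
    -- `K0 = G₋ ⊕ H0 ⊕ G₊*` as an orthogonal direct sum
    (OrthSets (suppPart vΔ {n : ℤ | n < 0})
        (couplingClosure iK'' iK' (K''m : Set K'') (K'p : Set K')) ∧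
      OrthSets (suppPart vΔ {n : ℤ | n < 0}) (suppPart vΔs {n : ℤ | 0 ≤ n}) ∧
      OrthSets (couplingClosure iK'' iK' (K''m : Set K'') (K'p : Set K'))
        (suppPart vΔs {n : ℤ | 0 ≤ n}) ∧
      (∀ z : K0, ∃ a ∈ suppPart vΔ {n : ℤ | n < 0},
        ∃ b ∈ couplingClosure iK'' iK' (K''m : Set K'') (K'p : Set K'),
        ∃ c ∈ suppPart vΔs {n : ℤ | 0 ≤ n}, z = a + b + c)) ∧
    -- `U0*(D) = D*`
    ((adjoint U0) ''
        couplingClosure iK'' iK' (K''m : Set K'') ((U' : K' → K') '' (K'p : Set K'))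
      = couplingClosure iK'' iK' ((adjoint U'') '' (K''m : Set K'')) (K'p : Set K')) ∧
    -- `D = {h ∈ H0 : U0* h ∈ H0}` and `D* = {h ∈ H0 : U0 h ∈ H0}`
    (couplingClosure iK'' iK' (K''m : Set K'') ((U' : K' → K') '' (K'p : Set K'))
      = {h : K0 | h ∈ couplingClosure iK'' iK' (K''m : Set K'') (K'p : Set K') ∧
          adjoint U0 h ∈ couplingClosure iK'' iK' (K''m : Set K'') (K'p : Set K')}) ∧
    (couplingClosure iK'' iK' ((adjoint U'') '' (K''m : Set K'')) (K'p : Set K')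
      = {h : K0 | h ∈ couplingClosure iK'' iK' (K''m : Set K'') (K'p : Set K') ∧
          U0 h ∈ couplingClosure iK'' iK' (K''m : Set K'') (K'p : Set K')}) :=
  stmt_17_general U0 hU0 U' hU' U'' hU'' K'p K''m hinvar' hinvar'' hcyc' hcyc'' J hJ Js hJs vΔ hvΔ
    hvΔJ vΔs hvΔs hvΔsJ iK' hiK'U iK'' hiK''U h106 han1 han2 han3 hor1 hor2 h107a h107b
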